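/- The set of periodic points of the map P defined on entire functions by P(f)(z) = f(0)·f(z+1) is dense in H(ℂ): for every entire function g and every ε > 0, R > 0, there exist an entire function h and an integer n ≥ 1 such that P^n(h) = h and sup_{|z| ≤ R} |h(z) − g(z)| < ε. -/

import Mathlib

/-!
If `h` is `n`-periodic, then `P^[n] h = c • h` with `c = ∏_{j<n} h(j)^(2^(n-1-j))`, so it suffices
to find an `n`-periodic entire `h` close to `g` on the disc with `c = 1`.

For `ω = 2πi/n` the `n`-periodic function `(exp (ω z) - 1) / ω` tends to the identity uniformly on
compacts as `n → ∞`, so `f = g ((exp (ω z) - 1) / ω) + δ` is `n`-periodic and close to `g`, and for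
a generic small `δ` it does not vanish at `0, …, n - 1`. Take `n = 2N` and
`h = f · exp (a · ((1 - exp (ω z)) / 2)^m)`. The base equals `1` at `z = N`, has modulus `< 1` at
the other integers `0 ≤ j < n` and modulus `≤ 1/2` on the disc, so for `m` large the weighted sum
defining `c` is dominated by its `j = N` term, and a coefficient `a` with `|a| / 2^m` small makes
`c = 1`.
-/

open Complex Filter Finset Function Metric Topology
open scoped Real

/-- The polynomial map `P(f)(z) = f(0) · f(z+1)` on functions `ℂ → ℂ`. -/
noncomputable def P (f : ℂ → ℂ) : ℂ → ℂ := fun z => f 0 * f (z + 1)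

theorem norm_sub_lt_two_of_ne_neg {E : Type*} [NormedAddCommGroup E] [NormedSpace ℝ E]
    [StrictConvexSpace ℝ E] {x y : E} (hx : ‖x‖ = 1) (hy : ‖y‖ = 1) (hxy : x ≠ -y) :
    ‖x - y‖ < 2 := by
  have hray : ¬SameRay ℝ x (-y) := fun h => hxy (h.eq_of_norm_eq (by rw [norm_neg, hx, hy]))
  simpa [sub_eq_add_neg, hx, hy, one_add_one_eq_two] using norm_add_lt_of_not_sameRay hray

theorem tendsto_sum_mul_pow_of_norm_lt_one {ι R : Type*} [NormedRing R] {s : Finset ι}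
    {w u : ι → R} {i₀ : ι} (hi₀ : i₀ ∈ s) (hu₀ : u i₀ = 1) (hu : ∀ i ∈ s, i ≠ i₀ → ‖u i‖ < 1) :
    Tendsto (fun m => ∑ i ∈ s, w i * u i ^ m) atTop (𝓝 (w i₀)) := by
  classical
  have hlim : w i₀ = ∑ i ∈ s, if i = i₀ then w i else 0 := by simp [hi₀]
  rw [hlim]
  refine tendsto_finsetSum s fun i hi => ?_
  split_ifs with h
  · simp [h, hu₀]
  · simpa using (tendsto_pow_atTop_nhds_zero_of_norm_lt_one (hu i hi h)).const_mul (w i)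

theorem prod_mul_exp_pow {ι : Type*} (s : Finset ι) (a x : ι → ℂ) (e : ι → ℕ) :
    ∏ i ∈ s, (a i * exp (x i)) ^ e i = (∏ i ∈ s, a i ^ e i) * exp (∑ i ∈ s, e i * x i) := by
  simp only [mul_pow, prod_mul_distrib, exp_sum, exp_nat_mul]

theorem P_iterate_apply (h : ℂ → ℂ) (n : ℕ) (z : ℂ) :
    P^[n] h z = (∏ j ∈ range n, h j ^ 2 ^ (n - 1 - j)) * h (z + n) := by
  induction n generalizing z with
  | zero => simp
  | succ n ih =>
    have hsq : (∏ j ∈ range n, h j ^ 2 ^ (n - 1 - j)) ^ 2 = ∏ j ∈ range n, h j ^ 2 ^ (n - j) := by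
      rw [← prod_pow]
      refine prod_congr rfl fun j hj => ?_
      rw [← pow_mul, ← pow_succ]
      have := mem_range.mp hj
      congr 2; omega
    rw [iterate_succ_apply', P, ih, ih, prod_range_succ, Nat.add_sub_cancel, Nat.sub_self, ← hsq]
    push_cast
    ring_nf

theorem P_iterate_eq_self {h : ℂ → ℂ} {n : ℕ} (hper : Periodic h n)
    (hprod : ∏ j ∈ range n, h j ^ 2 ^ (n - 1 - j) = 1) : P^[n] h = h := by
  ext z
  rw [P_iterate_apply, hprod, one_mul, hper]

noncomputable def expSubOneDiv (ω z : ℂ) : ℂ := (exp (ω * z) - 1) / ω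

theorem differentiable_expSubOneDiv (ω : ℂ) : Differentiable ℂ (expSubOneDiv ω) := by
  unfold expSubOneDiv; fun_prop

theorem periodic_expSubOneDiv (c : ℂ) : Periodic (expSubOneDiv (2 * π * I / c)) c := by
  rcases eq_or_ne c 0 with rfl | hc
  · simp [expSubOneDiv]
  intro z
  rw [expSubOneDiv, expSubOneDiv, mul_add, div_mul_cancel₀ _ hc, exp_periodic]

theorem norm_expSubOneDiv_sub_le {ω z : ℂ} (hω : ω ≠ 0) (hωz : ‖ω * z‖ ≤ 1) :
    ‖expSubOneDiv ω z - z‖ ≤ ‖ω‖ * ‖z‖ ^ 2 := by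
  have : expSubOneDiv ω z - z = (exp (ω * z) - 1 - ω * z) / ω := by
    rw [expSubOneDiv]; field_simp
  rw [this, norm_div, div_le_iff₀ (norm_pos_iff.mpr hω)]
  calc ‖exp (ω * z) - 1 - ω * z‖ ≤ ‖ω * z‖ ^ 2 := norm_exp_sub_one_sub_id_le hωz
    _ = ‖ω‖ * ‖z‖ ^ 2 * ‖ω‖ := by rw [norm_mul]; ring

theorem tendstoUniformlyOn_expSubOneDiv (R : ℝ) :
    TendstoUniformlyOn expSubOneDiv id (𝓝[≠] 0) (closedBall 0 R) := by
  rw [Metric.tendstoUniformlyOn_iff]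
  intro ε hε
  have hnorm : Tendsto (fun ω : ℂ => ‖ω‖ * max R 1 ^ 2) (𝓝[≠] 0) (𝓝 0) := by
    simpa using (tendsto_norm_zero.mono_left nhdsWithin_le_nhds).mul_const (max R 1 ^ 2)
  filter_upwards [self_mem_nhdsWithin, hnorm.eventually (gt_mem_nhds hε),
    hnorm.eventually (ge_mem_nhds one_pos)] with ω hω hsmall hle z hz
  have hzR : ‖z‖ ≤ max R 1 := (mem_closedBall_zero_iff.mp hz).trans (le_max_left _ _)
  have hz1 : ‖z‖ ≤ max R 1 ^ 2 := hzR.trans (by nlinarith [le_max_right R 1])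
  have hz2 : ‖z‖ ^ 2 ≤ max R 1 ^ 2 := pow_le_pow_left₀ (norm_nonneg z) hzR 2
  rw [dist_comm, dist_eq_norm]
  calc ‖expSubOneDiv ω z - z‖ ≤ ‖ω‖ * ‖z‖ ^ 2 :=
        norm_expSubOneDiv_sub_le hω (by rw [norm_mul]; nlinarith [norm_nonneg ω])
    _ ≤ ‖ω‖ * max R 1 ^ 2 := by gcongr
    _ < ε := hsmall

theorem tendstoUniformlyOn_comp_expSubOneDiv {g : ℂ → ℂ} (hg : Continuous g) (R : ℝ) :
    TendstoUniformlyOn (fun ω z => g (expSubOneDiv ω z)) g (𝓝[≠] 0) (closedBall 0 R) := by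
  have hF := tendstoUniformlyOn_expSubOneDiv R
  refine ((isCompact_closedBall 0 (R + 1)).uniformContinuousOn_of_continuous
    hg.continuousOn).comp_tendstoUniformlyOn_eventually ?_
    (fun z hz => closedBall_subset_closedBall (by linarith) hz) hF
  filter_upwards [Metric.tendstoUniformlyOn_iff.mp hF 1 one_pos] with ω hω z hz
  have hclose : dist z (expSubOneDiv ω z) < 1 := hω z hz
  rw [mem_closedBall] at hz ⊢
  linarith [dist_triangle_left (expSubOneDiv ω z) 0 z]

theorem tendsto_two_pi_I_div_natCast :
    Tendsto (fun n : ℕ => 2 * π * I / n) atTop (𝓝[≠] 0) := by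
  refine tendsto_nhdsWithin_iff.mpr ⟨tendsto_const_div_atTop_nhds_zero_nat _, ?_⟩
  filter_upwards [eventually_ne_atTop 0] with n hn
  simp [Real.pi_ne_zero, hn]

theorem exp_two_pi_I_div_mul_eq_neg_one {n N : ℕ} (hN : 2 * N = n) (hn : n ≠ 0) :
    exp (2 * π * I / n * N) = -1 := by
  have hN0 : (N : ℂ) ≠ 0 := by norm_cast; omega
  rw [← hN, Nat.cast_mul, Nat.cast_two, ← exp_pi_mul_I]
  congr 1
  field_simp

theorem exp_two_pi_I_div_mul_ne_neg_one {n N j : ℕ} (hN : 2 * N = n) (hn : n ≠ 0) (hj : j < n)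
    (hjN : j ≠ N) : exp (2 * π * I / n * j) ≠ -1 := by
  have hζ := isPrimitiveRoot_exp n hn
  have hpow (k : ℕ) : exp (2 * π * I / n * k) = exp (2 * π * I / n) ^ k := by
    rw [mul_comm, exp_nat_mul]
  intro h
  rw [← exp_two_pi_I_div_mul_eq_neg_one hN hn, hpow, hpow] at h
  exact hjN (hζ.pow_inj hj (by omega) h)

theorem norm_exp_two_pi_I_div_mul_natCast (n j : ℕ) : ‖exp (2 * π * I / n * j)‖ = 1 := by
  rw [norm_exp]
  simp

theorem exists_periodic_weighted_sum_eq {n N : ℕ} (hN : 2 * N = n) (hn : n ≠ 0) {R : ℝ}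
    (hR : ‖2 * π * I / n‖ * R ≤ 1 / 2) {w : ℕ → ℂ} (hw : w N ≠ 0) (b : ℂ) {τ : ℝ} (hτ : 0 < τ) :
    ∃ φ : ℂ → ℂ, Differentiable ℂ φ ∧ Periodic φ n ∧
      ∑ j ∈ range n, w j * φ j = b ∧ ∀ z, ‖z‖ ≤ R → ‖φ z‖ ≤ τ := by
  set u : ℂ → ℂ := fun z => (1 - exp (2 * π * I / n * z)) / 2
  have hu_per : Periodic u n := by
    have := (exp_periodic.const_mul (2 * π * I / n)).comp (fun e => (1 - e) / 2)
    rwa [inv_div, div_mul_cancel₀ _ (by simp [Real.pi_ne_zero])] at this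
  have hu_small : ∀ z : ℂ, ‖z‖ ≤ R → ‖u z‖ ≤ 1 / 2 := by
    intro z hz
    have hωz : ‖2 * π * I / n * z‖ ≤ 1 / 2 := by
      rw [norm_mul]; exact (mul_le_mul_of_nonneg_left hz (norm_nonneg _)).trans hR
    rw [norm_div, norm_sub_rev, Complex.norm_two]
    linarith [norm_exp_sub_one_le (hωz.trans (by norm_num))]
  have hu_N : u N = 1 := by
    simp only [u, exp_two_pi_I_div_mul_eq_neg_one hN hn]; norm_num
  have hu_lt : ∀ j ∈ range n, j ≠ N → ‖u j‖ < 1 := by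
    intro j hj hjN
    have := norm_sub_lt_two_of_ne_neg (norm_exp_two_pi_I_div_mul_natCast n j) (norm_one (α := ℂ))
      (exp_two_pi_I_div_mul_ne_neg_one hN hn (mem_range.mp hj) hjN)
    rw [norm_div, norm_sub_rev, Complex.norm_two]
    linarith
  set S : ℕ → ℂ := fun m => ∑ j ∈ range n, w j * u j ^ m
  have hS : Tendsto S atTop (𝓝 (w N)) :=
    tendsto_sum_mul_pow_of_norm_lt_one (mem_range.mpr (by omega)) hu_N hu_lt
  have hc : Tendsto (fun m => ‖b / S m‖ * (1 / 2 : ℝ) ^ m) atTop (𝓝 0) := by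
    simpa using ((tendsto_const_nhds.div hS hw).norm).mul
      (tendsto_pow_atTop_nhds_zero_of_lt_one (by norm_num) (by norm_num : (1 / 2 : ℝ) < 1))
  obtain ⟨m, hSm, hcm⟩ := ((hS.eventually_ne hw).and (hc.eventually_le_const hτ)).exists
  refine ⟨fun z => b / S m * u z ^ m, by fun_prop, fun z => by simp only [hu_per z], ?_, ?_⟩
  · simp_rw [mul_left_comm _ (b / S m), ← mul_sum]
    exact div_mul_cancel₀ b hSm
  · intro z hz
    calc ‖b / S m * u z ^ m‖ = ‖b / S m‖ * ‖u z‖ ^ m := by rw [norm_mul, norm_pow]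
      _ ≤ ‖b / S m‖ * (1 / 2) ^ m := by gcongr; exact hu_small z hz
      _ ≤ τ := hcm

theorem exists_P_iterate_eq_self_near {n N : ℕ} (hN : 2 * N = n) (hn : n ≠ 0) {R ε : ℝ}
    (hR : ‖2 * π * I / n‖ * R ≤ 1 / 2) (hε : 0 < ε) {f : ℂ → ℂ} (hf : Differentiable ℂ f)
    (hper : Periodic f n) (hf0 : ∀ j < n, f j ≠ 0) :
    ∃ h : ℂ → ℂ, Differentiable ℂ h ∧ P^[n] h = h ∧ ∀ z, ‖z‖ ≤ R → ‖h z - f z‖ < ε := by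
  obtain ⟨K, hK⟩ := (isCompact_closedBall (0 : ℂ) R).exists_bound_of_continuousOn
    hf.continuous.continuousOn
  set K' := max K 1
  have hK' : 0 < K' := lt_max_of_lt_right one_pos
  set B := ∏ j ∈ range n, f j ^ 2 ^ (n - 1 - j)
  have hB : B ≠ 0 := prod_ne_zero_iff.mpr fun j hj => pow_ne_zero _ (hf0 j (mem_range.mp hj))
  set τ := min 1 (ε / (4 * K'))
  obtain ⟨φ, hφ, hφper, hφsum, hφR⟩ := exists_periodic_weighted_sum_eq hN hn hR
    (w := fun j => 2 ^ (n - 1 - j)) (by simp) (-log B) (τ := τ) (by positivity)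
  refine ⟨fun z => f z * exp (φ z), hf.mul hφ.cexp,
    P_iterate_eq_self (fun z => by simp only [hper z, hφper z]) ?_, fun z hz => ?_⟩
  · rw [prod_mul_exp_pow]
    push_cast
    rw [hφsum, exp_neg, exp_log hB, mul_inv_cancel₀ hB]
  · have hfz : ‖f z‖ ≤ K' := (hK z (mem_closedBall_zero_iff.mpr hz)).trans (le_max_left _ _)
    have hexp : ‖exp (φ z) - 1‖ ≤ 2 * τ :=
      (norm_exp_sub_one_le ((hφR z hz).trans (min_le_left _ _))).trans (by linarith [hφR z hz])
    calc ‖f z * exp (φ z) - f z‖ = ‖f z‖ * ‖exp (φ z) - 1‖ := by rw [← norm_mul, mul_sub, mul_one]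
      _ ≤ K' * (2 * (ε / (4 * K'))) := by
          gcongr
          exact hexp.trans (by gcongr; exact min_le_right _ _)
      _ < ε := by field_simp; linarith

/-- The periodic points of `P` are dense in the space of entire functions. -/
theorem P_periodic_points_dense :
    ∀ g : ℂ → ℂ, Differentiable ℂ g → ∀ ε > (0 : ℝ), ∀ R > (0 : ℝ),
      ∃ h : ℂ → ℂ, Differentiable ℂ h ∧ ∃ n : ℕ, 1 ≤ n ∧ P^[n] h = h ∧
        ∀ z : ℂ, ‖z‖ ≤ R → ‖h z - g z‖ < ε := by
  intro g hg ε hε R hR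
  have hω := tendsto_two_pi_I_div_natCast.comp
    (tendsto_id.const_mul_atTop' two_pos : Tendsto (fun N : ℕ => 2 * N) atTop atTop)
  have hgW := hω.eventually (Metric.tendstoUniformlyOn_iff.mp
    (tendstoUniformlyOn_comp_expSubOneDiv hg.continuous R) (ε / 2) (half_pos hε))
  have hωR : ∀ᶠ N : ℕ in atTop, ‖2 * π * I / (2 * N : ℕ)‖ * R ≤ 1 / 2 :=
    ((hω.mono_right nhdsWithin_le_nhds).norm.mul_const R).eventually
      (ge_mem_nhds (by norm_num))
  obtain ⟨N, hN, hgW, hωR⟩ := ((eventually_gt_atTop 0).and (hgW.and hωR)).exists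
  set n := 2 * N
  set W := expSubOneDiv (2 * π * I / n)
  obtain ⟨δ, hδ, hδW⟩ := (infinite_of_mem_nhds (0 : ℂ) (ball_mem_nhds 0 (by positivity :
    0 < ε / 4))).exists_notMem_finset ((range n).image fun j : ℕ => -g (W j))
  obtain ⟨h, hh, hPh, hhf⟩ := exists_P_iterate_eq_self_near (f := fun z => g (W z) + δ) rfl
    (by omega) hωR (by positivity : 0 < ε / 4)
    ((hg.comp (differentiable_expSubOneDiv _)).add_const δ)
    ((periodic_expSubOneDiv n).comp fun w => g w + δ)
    (fun j hj h0 => hδW (mem_image.mpr ⟨j, mem_range.mpr hj, by linear_combination -h0⟩))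
  refine ⟨h, hh, n, by omega, hPh, fun z hz => ?_⟩
  have hgz : ‖g (W z) - g z‖ < ε / 2 := by
    rw [← dist_eq_norm, dist_comm]; exact hgW z (mem_closedBall_zero_iff.mpr hz)
  calc ‖h z - g z‖ = ‖(h z - (g (W z) + δ)) + (g (W z) - g z) + δ‖ := by ring_nf
    _ ≤ ‖h z - (g (W z) + δ)‖ + ‖g (W z) - g z‖ + ‖δ‖ := norm_add₃_le
    _ < ε / 4 + ε / 2 + ε / 4 := by gcongr; exacts [hhf z hz, mem_ball_zero_iff.mp hδ]
    _ = ε := by ring
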